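/- arXiv:2112.02404 — 3 statements merged into one kernel-verified Lean document; each statement's English description precedes it below -/
import Mathlib

section
/- Favorable propagation holds for the uniform cylindrical array under vertical expansion: let d > 0 and 0 < d_v < 1/2 be the fixed horizontal and vertical element spacings, let N ≥ 2 be a fixed number of elements per ring with R_N = d/(2 sin(π/N)), and let M ≥ 2 users have azimuths φ_i ∈ ℝ and polar angles θ_i ∈ [0, π] with θ_1 ≠ θ_i for every i = 2, …, M. For N_c ≥ 1 let h_{ih} ∈ ℂ^N have entries exp(i·2πR_N sin θ_i cos(φ_i − 2πn/N)), n = 0,…,N−1, let h_{iv} ∈ ℂ^{N_c} have entries exp(i·2π(m−1) d_v cos θ_i), m = 1,…,N_c, and set α_i = ⟨h_{1h} ⊗ h_{1v}, h_{ih} ⊗ h_{iv}⟩/(N_c N). Then lim_{N_c→∞} ∑_{i=2}^{M} |α_i|² = 0. -/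
open Real Complex Filter Finset

/-- Kronecker product of two complex vectors: `(a ⊗ b)` indexed so that entry
`(m, n)` (under the standard bijection `Fin p × Fin q ≃ Fin (p*q)`) is `a_m · b_n`. -/
noncomputable def kron {p q : ℕ} (a : Fin p → ℂ) (b : Fin q → ℂ) : Fin (p * q) → ℂ :=
  fun k => a (finProdFinEquiv.symm k).1 * b (finProdFinEquiv.symm k).2

/-- Inner product on `ℂ^p`, conjugate-linear in the first argument: `⟨a, b⟩ = a⁺ b`. -/
noncomputable def cinner {p : ℕ} (a b : Fin p → ℂ) : ℂ :=
  ∑ i, (starRingEnd ℂ) (a i) * b i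

/-!
The inner product of Kronecker products factors, so `α_i` is the product of the horizontal
factor `⟨h_{1h}, h_{ih}⟩ / N`, which does not depend on `N_c`, and the vertical factor
`⟨h_{1v}, h_{iv}⟩ / N_c`. The latter is `(1/N_c) ∑_{m < N_c} z^m` for the unimodular number
`z = exp(i·2π d_v (cos θ_i − cos θ_1))`, and `z ≠ 1` because `cos` is injective on `[0, π]` and
`|2π d_v (cos θ_i − cos θ_1)| < 2π`. Hence the geometric sum stays bounded by `2 / ‖z − 1‖`
and the vertical factor decays like `1 / N_c`.
-/

theorem cinner_kron {p q : ℕ} (a c : Fin p → ℂ) (b d : Fin q → ℂ) :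
    cinner (kron a b) (kron c d) = cinner a c * cinner b d := by
  simp only [cinner, kron, sum_mul_sum, ← finProdFinEquiv.sum_comp, Fintype.sum_prod_type,
    Equiv.symm_apply_apply, map_mul]
  exact sum_congr rfl fun _ _ => sum_congr rfl fun _ _ => by ring

theorem cinner_exp_linear_phase (n : ℕ) (s t : ℝ) :
    cinner (fun m : Fin n => exp (I * ((m : ℕ) * s : ℝ)))
        (fun m : Fin n => exp (I * ((m : ℕ) * t : ℝ))) =
      ∑ m ∈ range n, exp (I * (t - s : ℝ)) ^ m := by
  rw [cinner, ← Fin.sum_univ_eq_sum_range]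
  refine sum_congr rfl fun m _ => ?_
  rw [← exp_conj, ← Complex.exp_add, ← Complex.exp_nat_mul]
  simp only [map_mul, conj_I, conj_ofReal]
  push_cast
  ring_nf

section GeomSum

variable {𝕜 : Type*} [NormedDivisionRing 𝕜]

theorem norm_geom_sum_le_of_norm_le_one {z : 𝕜} (hz : ‖z‖ ≤ 1) (hz1 : z ≠ 1) (n : ℕ) :
    ‖∑ m ∈ range n, z ^ m‖ ≤ 2 / ‖z - 1‖ := by
  rw [geom_sum_eq hz1, norm_div]
  gcongr
  calc ‖z ^ n - 1‖ ≤ ‖z‖ ^ n + ‖(1 : 𝕜)‖ := by simpa only [norm_pow] using norm_sub_le (z ^ n) 1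
    _ ≤ 1 + 1 := by rw [norm_one]; gcongr; exact pow_le_one₀ (norm_nonneg z) hz
    _ = 2 := one_add_one_eq_two

theorem tendsto_norm_geom_sum_div_atTop {z : 𝕜} (hz : ‖z‖ ≤ 1) (hz1 : z ≠ 1) :
    Tendsto (fun n : ℕ => ‖∑ m ∈ range n, z ^ m‖ / n) atTop (nhds 0) :=
  squeeze_zero (fun _ => by positivity)
    (fun n => div_le_div_of_nonneg_right (norm_geom_sum_le_of_norm_le_one hz hz1 n) n.cast_nonneg)
    (tendsto_const_div_atTop_nhds_zero_nat _)

end GeomSum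

theorem exp_I_mul_ne_one {c : ℝ} (h0 : c ≠ 0) (h : |c| < 2 * π) : exp (I * c) ≠ 1 := by
  rw [Ne, Complex.exp_eq_one_iff]
  rintro ⟨n, hn⟩
  have hc : c = n * (2 * π) := by simpa using congrArg Complex.im hn
  rw [hc, abs_mul, abs_of_pos two_pi_pos, mul_lt_iff_lt_one_left two_pi_pos] at h
  have hn0 : n = 0 := Int.abs_lt_one_iff.1 (by exact_mod_cast h)
  exact h0 (by simpa [hn0] using hc)

theorem exp_I_mul_two_pi_mul_cos_sub_cos_ne_one {dv θ θ' : ℝ} (hdv : 0 < dv) (hdv2 : dv < 1 / 2)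
    (hθ : θ ∈ Set.Icc 0 π) (hθ' : θ' ∈ Set.Icc 0 π) (hne : θ ≠ θ') :
    exp (I * (2 * π * dv * (Real.cos θ' - Real.cos θ) : ℝ)) ≠ 1 := by
  have hcos : Real.cos θ' - Real.cos θ ≠ 0 :=
    sub_ne_zero.2 fun h => hne (Real.injOn_cos hθ hθ' h.symm)
  have hcos_le : |Real.cos θ' - Real.cos θ| ≤ 2 :=
    (abs_sub _ _).trans (by linarith [Real.abs_cos_le_one θ', Real.abs_cos_le_one θ])
  refine exp_I_mul_ne_one (by positivity) ?_
  rw [abs_mul, abs_of_pos (by positivity : 0 < 2 * π * dv)]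
  calc 2 * π * dv * |Real.cos θ' - Real.cos θ| ≤ 2 * π * dv * 2 := by gcongr
    _ < 2 * π := by nlinarith [pi_pos]

theorem ucla_favorable_propagation_vertical_general
    (dv : ℝ) (hdv : 0 < dv) (hdv2 : dv < 1 / 2)
    (N : ℕ) (M : ℕ)
    (θ : ℕ → ℝ) (hθ : ∀ i, θ i ∈ Set.Icc (0 : ℝ) π)
    (hθdist : ∀ i, 2 ≤ i → i ≤ M → θ 1 ≠ θ i)
    (hh : (i : ℕ) → Fin N → ℂ)
    (hv : (i : ℕ) → (Nc : ℕ) → Fin Nc → ℂ)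
    (hvdef : ∀ i Nc (m : Fin Nc), hv i Nc m = Complex.exp (Complex.I *
      ((2 * π * (m : ℕ) * dv * Real.cos (θ i) : ℝ) : ℂ))) :
    Tendsto (fun Nc : ℕ =>
      ∑ i ∈ Finset.Icc 2 M,
        ‖cinner (kron (hh 1) (hv 1 Nc)) (kron (hh i) (hv i Nc))
          / ((Nc : ℂ) * (N : ℂ))‖ ^ 2)
      atTop (nhds 0) := by
  have hv_linear : ∀ i Nc, hv i Nc =
      fun m : Fin Nc => exp (I * ((m : ℕ) * (2 * π * dv * Real.cos (θ i)) : ℝ)) := by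
    intro i Nc
    funext m
    rw [hvdef]
    ring_nf
  rw [← sum_const_zero (s := Icc 2 M)]
  refine tendsto_finsetSum _ fun i hi => ?_
  obtain ⟨h2i, hiM⟩ := mem_Icc.1 hi
  set z := exp (I * (2 * π * dv * (Real.cos (θ i) - Real.cos (θ 1)) : ℝ))
  have hz1 : z ≠ 1 :=
    exp_I_mul_two_pi_mul_cos_sub_cos_ne_one hdv hdv2 (hθ 1) (hθ i) (hθdist i h2i hiM)
  have hz : ‖z‖ ≤ 1 := (norm_exp_I_mul_ofReal _).le
  have hsplit : ∀ Nc : ℕ,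
      ‖cinner (kron (hh 1) (hv 1 Nc)) (kron (hh i) (hv i Nc)) / ((Nc : ℂ) * (N : ℂ))‖ ^ 2 =
        (‖cinner (hh 1) (hh i)‖ / N) ^ 2 * (‖∑ m ∈ range Nc, z ^ m‖ / Nc) ^ 2 := by
    intro Nc
    rw [cinner_kron, hv_linear, hv_linear, cinner_exp_linear_phase, ← mul_sub, norm_div, norm_mul,
      norm_mul, Complex.norm_natCast, Complex.norm_natCast]
    ring
  simp_rw [hsplit]
  simpa using ((tendsto_norm_geom_sum_div_atTop hz hz1).pow 2).const_mul _

/-- Favorable propagation for the uniform cylindrical array under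
vertical expansion (`N_c → ∞`, fixed ring size `N ≥ 2`), with vertical spacing
`0 < d_v < 1/2` and `θ_1 ≠ θ_i` for every `i = 2,…,M` (polar angles in `[0, π]`).
Here `h_{ih} ∈ ℂ^N` is the UCA steering vector with `R_N = d/(2 sin(π/N))`,
`h_{iv}(N_c) ∈ ℂ^{N_c}` the vertical ULA steering vector, and
`α_i = ⟨h_{1h} ⊗ h_{1v}, h_{ih} ⊗ h_{iv}⟩/(N_c N)`. -/
theorem ucla_favorable_propagation_vertical
    (d dv : ℝ) (hd : 0 < d) (hdv : 0 < dv) (hdv2 : dv < 1 / 2)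
    (N : ℕ) (hN : 2 ≤ N) (M : ℕ) (hM : 2 ≤ M)
    (φ θ : ℕ → ℝ) (hθ : ∀ i, θ i ∈ Set.Icc (0 : ℝ) π)
    (hθdist : ∀ i, 2 ≤ i → i ≤ M → θ 1 ≠ θ i)
    (hh : (i : ℕ) → Fin N → ℂ)
    (hhdef : ∀ i (n : Fin N), hh i n = Complex.exp (Complex.I *
      ((2 * π * (d / (2 * Real.sin (π / N))) * Real.sin (θ i) *
        Real.cos (φ i - 2 * π * n / N) : ℝ) : ℂ)))
    (hv : (i : ℕ) → (Nc : ℕ) → Fin Nc → ℂ)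
    (hvdef : ∀ i Nc (m : Fin Nc), hv i Nc m = Complex.exp (Complex.I *
      ((2 * π * (m : ℕ) * dv * Real.cos (θ i) : ℝ) : ℂ))) :
    Tendsto (fun Nc : ℕ =>
      ∑ i ∈ Finset.Icc 2 M,
        ‖cinner (kron (hh 1) (hv 1 Nc)) (kron (hh i) (hv i Nc))
          / ((Nc : ℂ) * (N : ℂ))‖ ^ 2)
      atTop (nhds 0) :=
  ucla_favorable_propagation_vertical_general dv hdv hdv2 N M θ hθ hθdist hh hv hvdef
end

section
/- Kapteyn's inequality: for every integer n ≥ 1 and every real x with |x| ≤ 1, the Bessel function of the first kind satisfies |J_n(n x)| ≤ ( |x| · exp(√(1 − x²)) / (1 + √(1 − x²)) )^n. -/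
open Real intervalIntegral

/-!
`J_n(y)` is the `n`-th Laurent coefficient of `exp((y/2)(t - t⁻¹))`, so
`2πi J_n(y) = ∮_{|t|=r} exp((y/2)(t - t⁻¹)) t^(-n-1) dt` for every radius `r`. On `|t| = r ≥ 1`
the real part of `(y/2)(t - t⁻¹)` is at most `(|y|/2)(r - r⁻¹)`, which gives the Cauchy estimate
`|J_n(y)| ≤ exp((|y|/2)(r - r⁻¹)) r^(-n)`. For `y = n x` the radius `r = (1 + √(1 - x²))/|x|`
minimises the right-hand side, and its value there is Kapteyn's bound.
-/

/-- Bessel function of the first kind of integer order `n`: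
`J_n(x) = (1/π) ∫₀^π cos(nθ − x sin θ) dθ`. -/
noncomputable def besselJ (n : ℤ) (x : ℝ) : ℝ :=
  (1 / π) * ∫ θ in (0 : ℝ)..π, Real.cos (n * θ - x * Real.sin θ)

noncomputable def besselLaurentIntegrand (n : ℤ) (y : ℝ) (t : ℂ) : ℂ :=
  Complex.exp (y / 2 * (t - t⁻¹)) * t ^ (-(n + 1))

lemma differentiableAt_besselLaurentIntegrand (n : ℤ) (y : ℝ) {t : ℂ} (ht : t ≠ 0) :
    DifferentiableAt ℂ (besselLaurentIntegrand n y) t :=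
  (((differentiableAt_const _).mul (differentiableAt_id.sub (differentiableAt_inv ht))).cexp).mul
    (differentiableAt_zpow.mpr (Or.inl ht))

lemma besselLaurentIntegrand_circleMap (n : ℤ) (y θ : ℝ) :
    deriv (circleMap 0 1) θ • besselLaurentIntegrand n y (circleMap 0 1 θ) =
      Complex.I * Complex.exp (Complex.I * (y * Real.sin θ - n * θ)) := by
  have hsin : Complex.exp (θ * Complex.I) - (Complex.exp (θ * Complex.I))⁻¹ =
      2 * Complex.I * Real.sin θ := by
    rw [← Complex.exp_neg, Complex.ofReal_sin, Complex.sin, neg_mul]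
    linear_combination
      (Complex.exp (θ * Complex.I) - Complex.exp (-(θ * Complex.I))) * Complex.I_sq
  rw [deriv_circleMap, besselLaurentIntegrand, smul_eq_mul, circleMap_zero, Complex.ofReal_one,
    one_mul, hsin, ← Complex.exp_int_mul]
  simp only [mul_assoc, mul_left_comm _ Complex.I, ← Complex.exp_add]
  congr 2
  push_cast
  ring

lemma integral_symm_interval_eq_integral_add_comp_neg {E : Type*} [NormedAddCommGroup E]
    [NormedSpace ℝ E] {f : ℝ → E} (hf : Continuous f) (a : ℝ) :
    ∫ θ in -a..a, f θ = ∫ θ in 0..a, (f θ + f (-θ)) := by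
  rw [← integral_add_adjacent_intervals (b := 0) (hf.intervalIntegrable _ _)
    (hf.intervalIntegrable _ _), integral_add (hf.intervalIntegrable _ _)
    (by exact (hf.comp continuous_neg).intervalIntegrable _ _ :
      IntervalIntegrable (fun θ => f (-θ)) _ 0 a), integral_comp_neg, neg_zero, add_comm]

lemma integral_exp_I_mul_eq_two_pi_mul_besselJ (n : ℤ) (y : ℝ) :
    ∫ θ in (0 : ℝ)..2 * π, Complex.exp (Complex.I * (y * Real.sin θ - n * θ)) =
      2 * π * besselJ n y := by
  set f : ℝ → ℂ := fun θ => Complex.exp (Complex.I * (y * Real.sin θ - n * θ)) with hf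
  have hper : Function.Periodic f (2 * π) := fun θ =>
    Complex.exp_eq_exp_iff_exists_int.mpr ⟨-n, by rw [Real.sin_add_two_pi]; push_cast; ring⟩
  have hsymm (θ : ℝ) : f θ + f (-θ) = 2 * Real.cos (n * θ - y * Real.sin θ) := by
    simp only [hf, Real.sin_neg, Complex.ofReal_cos, Complex.cos]
    push_cast
    ring_nf
  have hcont : Continuous f := by fun_prop
  calc ∫ θ in (0 : ℝ)..2 * π, f θ = ∫ θ in -π..π, f θ := by
        simpa [two_mul] using hper.intervalIntegral_add_eq 0 (-π)
    _ = ∫ θ in (0 : ℝ)..π, (2 * Real.cos (n * θ - y * Real.sin θ) : ℂ) := by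
        rw [integral_symm_interval_eq_integral_add_comp_neg hcont]
        simp_rw [hsymm]
    _ = 2 * π * besselJ n y := by
        rw [integral_const_mul, intervalIntegral.integral_ofReal, besselJ]
        push_cast
        field_simp

lemma circleIntegral_besselLaurentIntegrand (n : ℤ) (y : ℝ) {r : ℝ} (hr : 1 ≤ r) :
    ∮ t in C(0, r), besselLaurentIntegrand n y t = 2 * π * Complex.I * besselJ n y := by
  have hne {t : ℂ} (ht : t ∉ Metric.ball 0 1) : t ≠ 0 := by
    rintro rfl
    exact ht (Metric.mem_ball_self one_pos)
  calc ∮ t in C(0, r), besselLaurentIntegrand n y t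
      = ∮ t in C(0, 1), besselLaurentIntegrand n y t :=
        Complex.circleIntegral_eq_of_differentiable_on_annulus_off_countable one_pos hr
          Set.countable_empty
          (fun t ht => (differentiableAt_besselLaurentIntegrand n y
            (hne ht.2)).continuousAt.continuousWithinAt)
          (fun t ht => differentiableAt_besselLaurentIntegrand n y
            (hne fun h => ht.1.2 (Metric.ball_subset_closedBall h)))
    _ = Complex.I * ∫ θ in (0 : ℝ)..2 * π, Complex.exp (Complex.I * (y * Real.sin θ - n * θ)) := by
        simp only [circleIntegral, besselLaurentIntegrand_circleMap, integral_const_mul]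
    _ = 2 * π * Complex.I * besselJ n y := by
        rw [integral_exp_I_mul_eq_two_pi_mul_besselJ]
        ring

lemma norm_besselLaurentIntegrand_le (n : ℤ) (y : ℝ) {r : ℝ} (hr : 1 ≤ r) {t : ℂ}
    (ht : ‖t‖ = r) :
    ‖besselLaurentIntegrand n y t‖ ≤ Real.exp (|y| / 2 * (r - r⁻¹)) * r ^ (-(n + 1)) := by
  rw [besselLaurentIntegrand, norm_mul, norm_zpow, ht, Complex.norm_exp]
  gcongr
  have hre : ((y : ℂ) / 2 * (t - t⁻¹)).re = y / 2 * (t.re * (1 - r⁻¹ ^ 2)) := by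
    rw [show (y : ℂ) / 2 = ((y / 2 : ℝ) : ℂ) by push_cast; ring, Complex.re_ofReal_mul,
      Complex.sub_re, Complex.inv_re, Complex.normSq_eq_norm_sq, ht]
    ring
  have hfactor : 0 ≤ 1 - r⁻¹ ^ 2 := by
    rw [sub_nonneg]
    exact pow_le_one₀ (by positivity) (inv_le_one_of_one_le₀ hr)
  calc ((y : ℂ) / 2 * (t - t⁻¹)).re
      ≤ |y| / 2 * (|t.re| * (1 - r⁻¹ ^ 2)) := by
        rw [hre]
        refine (le_abs_self _).trans_eq ?_
        rw [abs_mul, abs_mul, abs_div, abs_two, abs_of_nonneg hfactor]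
    _ ≤ |y| / 2 * (r * (1 - r⁻¹ ^ 2)) := by
        gcongr
        exact ht ▸ Complex.abs_re_le_norm t
    _ = |y| / 2 * (r - r⁻¹) := by
        field_simp

theorem abs_besselJ_le (n : ℤ) (y : ℝ) {r : ℝ} (hr : 1 ≤ r) :
    |besselJ n y| ≤ Real.exp (|y| / 2 * (r - r⁻¹)) * r ^ (-n) := by
  have hr0 : 0 < r := one_pos.trans_le hr
  have hint := circleIntegral.norm_integral_le_of_norm_le_const hr0.le
    fun t ht => norm_besselLaurentIntegrand_le n y hr (mem_sphere_zero_iff_norm.mp ht)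
  rw [circleIntegral_besselLaurentIntegrand n y hr, norm_mul, norm_mul, Complex.norm_I, mul_one,
    Complex.norm_real, Real.norm_eq_abs, norm_mul, Complex.norm_real, Real.norm_of_nonneg pi_pos.le,
    Complex.norm_two] at hint
  have hpow : r * r ^ (-(n + 1)) = r ^ (-n) := by
    rw [neg_add, zpow_add₀ hr0.ne', zpow_neg_one]
    field_simp
  refine le_of_mul_le_mul_left (a := 2 * π) (hint.trans_eq ?_) (by positivity)
  rw [← hpow]
  ring

theorem abs_besselJ_natCast_mul_le (n : ℕ) (x : ℝ) {r : ℝ} (hr : 1 ≤ r) :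
    |besselJ n (n * x)| ≤ (Real.exp (|x| / 2 * (r - r⁻¹)) * r⁻¹) ^ n := by
  convert abs_besselJ_le n (n * x) hr using 1
  rw [mul_pow, ← Real.exp_nat_mul, zpow_neg, zpow_natCast, inv_pow, abs_mul, Nat.abs_cast]
  ring_nf

theorem besselJ_zero_right {n : ℤ} (hn : n ≠ 0) : besselJ n 0 = 0 := by
  simp [besselJ, integral_comp_mul_left (fun θ => Real.cos θ) (Int.cast_ne_zero.mpr hn),
    Real.sin_int_mul_pi]

/-- Kapteyn's inequality: for every integer `n ≥ 1` and `|x| ≤ 1`,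
`|J_n(n x)| ≤ (|x| exp(√(1 − x²)) / (1 + √(1 − x²)))^n`. -/
theorem kapteyn_inequality (n : ℕ) (hn : 1 ≤ n) (x : ℝ) (hx : |x| ≤ 1) :
    |besselJ n (n * x)| ≤
      (|x| * Real.exp (Real.sqrt (1 - x ^ 2)) / (1 + Real.sqrt (1 - x ^ 2))) ^ n := by
  rcases (abs_nonneg x).eq_or_lt with hx0 | hxpos
  · rw [← hx0, abs_eq_zero.mp hx0.symm, mul_zero, besselJ_zero_right (by omega),
      zero_mul, zero_div, zero_pow (by omega), abs_zero]
  set s := Real.sqrt (1 - x ^ 2)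
  have hs : s ^ 2 = 1 - |x| ^ 2 := by
    rw [sq_abs, Real.sq_sqrt (by nlinarith [sq_abs x, abs_nonneg x])]
  have hs0 : 0 ≤ s := Real.sqrt_nonneg _
  have hr : 1 ≤ (1 + s) / |x| := by
    rw [one_le_div hxpos]
    linarith
  have hexp : |x| / 2 * ((1 + s) / |x| - ((1 + s) / |x|)⁻¹) = s := by
    field_simp
    nlinarith
  convert abs_besselJ_natCast_mul_le n x hr using 2
  rw [hexp, inv_div]
  ring
end

section
/- Failure of favorable propagation when the angle-of-arrival gap shrinks as 2π/N: let d > 0, and for each integer N ≥ 2 set R_N = d/(2 sin(π/N)) and φ_2 = 2π/N, so that z_N = 4π R_N sin(φ_2/2) = 2π d for every N, and define α_N = (1/N) ∑_{n=0}^{N−1} exp( i · 2π d · sin(2πn/N − π/N) ). Then lim_{N→∞} α_N = J_0(2π d), where J_0(x) = (1/π) ∫₀^π cos(x sin θ) dθ is the Bessel function of the first kind of order 0. Consequently, if 2πd is not a zero of J_0, the inter-user interference leakage does not vanish as N → ∞. -/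
open Real Complex Filter Finset intervalIntegral

/-- Bessel function of the first kind of order 0:
`J_0(x) = (1/π) ∫₀^π cos(x sin θ) dθ`. -/
noncomputable def besselJ0 (x : ℝ) : ℝ :=
  (1 / π) * ∫ θ in (0 : ℝ)..π, Real.cos (x * Real.sin θ)

/-!
`α_N` is the left Riemann sum with step `2π/N` (scaled by `1/2π`) of the `2π`-periodic function
`θ ↦ exp(i·2πd·sin θ)` over one period. This function is Lipschitz, so the Riemann sum differs
from the period average by `O(1/N)`, uniformly in the offset `-π/N`. Pairing `θ` with `θ + π`
turns the period average into `(1/π) ∫₀^π cos(2πd sin θ) dθ = J₀(2πd)`.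
-/

open scoped NNReal Topology Interval

theorem Complex.lipschitzWith_exp_I_mul_ofReal : LipschitzWith 1 fun x : ℝ ↦ exp (I * x) := by
  refine LipschitzWith.of_dist_le_mul fun x y ↦ ?_
  have hfactor : exp (I * x) - exp (I * y) = exp (I * y) * (exp (I * ↑(x - y)) - 1) := by
    rw [mul_sub, ← Complex.exp_add, ofReal_sub]; ring_nf
  rw [dist_eq_norm, hfactor, norm_mul, norm_exp_I_mul_ofReal, one_mul, NNReal.coe_one, one_mul,
    Real.dist_eq, ← Real.norm_eq_abs]
  exact Real.norm_exp_I_mul_ofReal_sub_one_le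

theorem lipschitzWith_exp_I_mul_sin (c : ℝ) :
    LipschitzWith ‖c‖₊ fun θ : ℝ ↦ exp (I * ↑(c * Real.sin θ)) := by
  have h := Complex.lipschitzWith_exp_I_mul_ofReal.comp
    ((lipschitzWith_smul c).comp Real.lipschitzWith_sin)
  rwa [one_mul, mul_one] at h

section RiemannSum

variable {E : Type*} [NormedAddCommGroup E] [NormedSpace ℝ E] [CompleteSpace E]
  {f : ℝ → E} {K : ℝ≥0}

theorem LipschitzWith.norm_integral_sub_smul_le (hf : LipschitzWith K f) (a : ℝ) {h : ℝ}
    (hh : 0 ≤ h) : ‖(∫ x in a..a + h, f x) - h • f a‖ ≤ K * h ^ 2 := by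
  have hconst : h • f a = ∫ _ in a..a + h, f a := by simp
  have hbound : ∀ x ∈ Ι a (a + h), ‖f x - f a‖ ≤ K * h := fun x hx ↦ by
    rw [Set.uIoc_of_le (by linarith)] at hx
    rw [← dist_eq_norm]
    calc dist (f x) (f a) ≤ K * dist x a := hf.dist_le_mul x a
      _ ≤ K * h := by
        gcongr; rw [Real.dist_eq, abs_of_nonneg (by linarith [hx.1])]; linarith [hx.2]
  rw [hconst, ← integral_sub (hf.continuous.intervalIntegrable _ _) intervalIntegrable_const]
  calc _ ≤ K * h * |a + h - a| := norm_integral_le_of_norm_le_const hbound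
    _ = K * h ^ 2 := by rw [add_sub_cancel_left, abs_of_nonneg hh]; ring

theorem LipschitzWith.norm_smul_sum_sub_integral_le (hf : LipschitzWith K f) (a : ℝ) {h : ℝ}
    (hh : 0 ≤ h) (N : ℕ) :
    ‖h • ∑ k ∈ range N, f (a + k * h) - ∫ x in a..a + N * h, f x‖ ≤ N * (K * h ^ 2) := by
  have hsplit :
      ∫ x in a..a + N * h, f x = ∑ k ∈ range N, ∫ x in a + k * h..a + k * h + h, f x := by
    have := sum_integral_adjacent_intervals (a := fun k : ℕ ↦ a + k * h) (n := N)
      (μ := MeasureTheory.volume) (fun k _ ↦ hf.continuous.intervalIntegrable _ _)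
    simpa [add_mul, add_assoc] using this.symm
  rw [hsplit, smul_sum, ← sum_sub_distrib]
  calc _ ≤ ∑ k ∈ range N, ‖h • f (a + k * h) - ∫ x in a + k * h..a + k * h + h, f x‖ :=
        norm_sum_le _ _
    _ ≤ ∑ _k ∈ range N, K * h ^ 2 :=
        sum_le_sum fun k _ ↦ (norm_sub_rev _ _).trans_le (hf.norm_integral_sub_smul_le _ hh)
    _ = N * (K * h ^ 2) := by simp

theorem LipschitzWith.norm_average_sum_sub_average_integral_le (hf : LipschitzWith K f)
    {T : ℝ} (hper : Function.Periodic f T) (hT : 0 < T) (a : ℝ) {N : ℕ} (hN : N ≠ 0) :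
    ‖(N : ℝ)⁻¹ • ∑ k ∈ range N, f (a + k * (T / N)) - T⁻¹ • ∫ x in 0..T, f x‖ ≤ K * T / N := by
  have hNpos : (0 : ℝ) < N := Nat.cast_pos.mpr (Nat.pos_of_ne_zero hN)
  have hperiod : ∫ x in 0..T, f x = ∫ x in a..a + N * (T / N), f x := by
    rw [mul_div_cancel₀ _ hNpos.ne', hper.intervalIntegral_add_eq a 0, zero_add]
  have hscale : (N : ℝ)⁻¹ • ∑ k ∈ range N, f (a + k * (T / N))
      = T⁻¹ • (T / N) • ∑ k ∈ range N, f (a + k * (T / N)) := by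
    rw [smul_smul, inv_mul_eq_div, div_div_cancel_left' hT.ne']
  rw [hscale, hperiod, ← smul_sub, norm_smul, Real.norm_of_nonneg (inv_nonneg.mpr hT.le)]
  calc _ ≤ T⁻¹ * (N * (K * (T / N) ^ 2)) := by
        gcongr; exact hf.norm_smul_sum_sub_integral_le a (by positivity) N
    _ = K * T / N := by field_simp

theorem LipschitzWith.tendsto_average_sum (hf : LipschitzWith K f) {T : ℝ}
    (hper : Function.Periodic f T) (hT : 0 < T) (a : ℕ → ℝ) :
    Tendsto (fun N : ℕ ↦ (N : ℝ)⁻¹ • ∑ k ∈ range N, f (a N + k * (T / N))) atTop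
      (𝓝 (T⁻¹ • ∫ x in 0..T, f x)) := by
  rw [tendsto_iff_norm_sub_tendsto_zero]
  refine squeeze_zero' (Eventually.of_forall fun _ ↦ norm_nonneg _) ?_
    (tendsto_const_div_atTop_nhds_zero_nat (K * T))
  filter_upwards [eventually_ne_atTop 0] with N hN
  exact hf.norm_average_sum_sub_average_integral_le hper hT (a N) hN

end RiemannSum

theorem integral_zero_two_mul_eq_integral_add_comp_add {E : Type*} [NormedAddCommGroup E]
    [NormedSpace ℝ E] {g : ℝ → E} (hg : Continuous g) (T : ℝ) :
    ∫ x in 0..2 * T, g x = ∫ x in 0..T, (g x + g (x + T)) := by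
  rw [integral_add (g := fun x ↦ g (x + T)) (hg.intervalIntegrable _ _)
      ((hg.comp (continuous_add_const T)).intervalIntegrable _ _),
    integral_comp_add_right, zero_add, two_mul,
    integral_add_adjacent_intervals (hg.intervalIntegrable _ _) (hg.intervalIntegrable _ _)]

theorem ofReal_besselJ0_eq_average (c : ℝ) :
    (besselJ0 c : ℂ) = (2 * π)⁻¹ • ∫ θ in 0..2 * π, exp (I * ↑(c * Real.sin θ)) := by
  have hpair : ∀ θ : ℝ, exp (I * ↑(c * Real.sin θ)) + exp (I * ↑(c * Real.sin (θ + π)))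
      = ↑(2 * Real.cos (c * Real.sin θ)) := fun θ ↦ by
    simp only [Real.sin_add_pi, mul_neg, ofReal_neg, ofReal_mul, ofReal_ofNat, ofReal_cos,
      Complex.cos]
    ring_nf
  rw [integral_zero_two_mul_eq_integral_add_comp_add (by fun_prop)]
  simp only [hpair, intervalIntegral.integral_ofReal, integral_const_mul, besselJ0]
  rw [Complex.real_smul]
  push_cast
  field_simp

theorem uca_no_fp_shrinking_gap_general (d : ℝ) (α : ℕ → ℂ)
    (hα : ∀ N : ℕ, α N = (1 / (N : ℂ)) * ∑ n ∈ Finset.range N,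
      Complex.exp (Complex.I *
        ((2 * π * d * Real.sin (2 * π * n / N - π / N) : ℝ) : ℂ))) :
    Tendsto α atTop (nhds ((besselJ0 (2 * π * d) : ℝ) : ℂ)) ∧
    (besselJ0 (2 * π * d) ≠ 0 →
      ¬ Tendsto (fun N : ℕ => ‖α N‖) atTop (nhds 0)) := by
  set f : ℝ → ℂ := fun θ ↦ exp (I * ↑(2 * π * d * Real.sin θ))
  have hα_riemann : α = fun N : ℕ ↦ (N : ℝ)⁻¹ • ∑ k ∈ range N, f (-π / N + k * (2 * π / N)) := by
    funext N
    rw [hα N, Complex.real_smul, one_div, ofReal_inv, ofReal_natCast]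
    congr 1
    refine sum_congr rfl fun k _ ↦ ?_
    simp only [f]
    ring_nf
  have hlim : Tendsto α atTop (𝓝 (besselJ0 (2 * π * d) : ℂ)) := by
    rw [hα_riemann, ofReal_besselJ0_eq_average]
    exact (lipschitzWith_exp_I_mul_sin _).tendsto_average_sum
      (fun θ ↦ by simp only [Real.sin_add_two_pi]) two_pi_pos _
  refine ⟨hlim, fun hJ hzero ↦ hJ ?_⟩
  simpa using tendsto_nhds_unique hlim.norm hzero

/-- failure of favorable propagation when the AoA gap shrinks as `2π/N`:
for `d > 0`, with `φ_2 = 2π/N` and `R_N = d/(2 sin(π/N))` one has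
`z_N = 4π R_N sin(φ_2/2) = 2πd` for every `N`, and
`α_N = (1/N) ∑_{n<N} exp(i · 2πd · sin(2πn/N − π/N)) → J_0(2πd)` as `N → ∞`.
Consequently, if `2πd` is not a zero of `J_0`, the inter-user interference leakage
does not vanish as `N → ∞`. -/
theorem uca_no_fp_shrinking_gap (d : ℝ) (hd : 0 < d) (α : ℕ → ℂ)
    (hα : ∀ N : ℕ, α N = (1 / (N : ℂ)) * ∑ n ∈ Finset.range N,
      Complex.exp (Complex.I *
        ((2 * π * d * Real.sin (2 * π * n / N - π / N) : ℝ) : ℂ))) :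
    Tendsto α atTop (nhds ((besselJ0 (2 * π * d) : ℝ) : ℂ)) ∧
    (besselJ0 (2 * π * d) ≠ 0 →
      ¬ Tendsto (fun N : ℕ => ‖α N‖) atTop (nhds 0)) :=
  uca_no_fp_shrinking_gap_general d α hα
end
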